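/- Let H = ⟨X ∪ {t} | R, t⁻¹ a t = φ(a) for all a ∈ A⟩ be an HNN-extension of G = ⟨X | R⟩ with associated subgroups A and B = φ(A), and suppose g₁ ∈ G is not a proper power in G. Then the image of g₁ in H is a proper power in H if and only if there exist k ≥ 2 and g₂ ∈ G such that g₁ is conjugate in H to g₂^k. -/

import Mathlib

/-!
The heart of the matter: an element `x` of the HNN extension with `x ^ k = of g` for some `k ≥ 1`
is conjugate into `G`. Conjugating away pinches between the last and the first letter makes `x`
conjugate to the product of a cyclically reduced word `w`. If `w` contains a letter `t ^ (±1)`,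
then `n` copies of `w` glue to a reduced word for `w ^ n`, so the `t`-length of `w ^ n` grows
linearly in `n`. But `w ^ (k * j)` is conjugate, by one fixed element `c`, to `of (g ^ j)`, and
multiplying by the fixed element `c` changes the `t`-length by a bounded amount.
Hence `w` lies in `G`. The converse direction holds in any group: a conjugate of a `k`-th power is
a `k`-th power.
-/

/-- `g` is a proper power: `g = h ^ k` for some `h` and some `k ≥ 2`. -/
def IsProperPower {G : Type*} [Group G] (g : G) : Prop :=
  ∃ (h : G) (k : ℕ), 2 ≤ k ∧ g = h ^ k

theorem IsProperPower.of_isConj {G : Type*} [Group G] {a b : G} (hb : IsProperPower b)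
    (h : IsConj a b) : IsProperPower a := by
  obtain ⟨y, k, hk, rfl⟩ := hb
  obtain ⟨c, hc⟩ := isConj_iff.1 h.symm
  exact ⟨c * y * c⁻¹, k, hk, by rw [conj_pow, hc]⟩

namespace HNNExtension

open NormalWord

variable {G : Type*} [Group G] {A B : Subgroup G} {φ : A ≃* B}

/-- A letter `(u, g)` stands for `t ^ u * of g`; consecutive letters `a b` satisfy `NoPinch` when
they do not contain a pinch `t ^ u * of g * t ^ (-u)` with `g ∈ toSubgroup A B u`. -/
def NoPinch (A B : Subgroup G) (a b : ℤˣ × G) : Prop :=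
  a.2 ∈ toSubgroup A B a.1 → a.1 = b.1

def prodLetters (l : List (ℤˣ × G)) : HNNExtension G A B φ :=
  (l.map fun x => t ^ (x.1 : ℤ) * of x.2).prod

@[simp]
lemma prodLetters_nil : (prodLetters [] : HNNExtension G A B φ) = 1 := rfl

@[simp]
lemma prodLetters_cons (a : ℤˣ × G) (l : List (ℤˣ × G)) :
    (prodLetters (a :: l) : HNNExtension G A B φ) = t ^ (a.1 : ℤ) * of a.2 * prodLetters l := by
  simp [prodLetters]

@[simp]
lemma prodLetters_append (l₁ l₂ : List (ℤˣ × G)) :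
    (prodLetters (l₁ ++ l₂) : HNNExtension G A B φ) = prodLetters l₁ * prodLetters l₂ := by
  simp [prodLetters]

lemma isChain_noPinch_append_singleton {l : List (ℤˣ × G)} {v : ℤˣ} {b b' : G}
    (h : (l ++ [(v, b)]).IsChain (NoPinch A B)) : (l ++ [(v, b')]).IsChain (NoPinch A B) := by
  rw [List.isChain_append] at h ⊢
  refine ⟨h.1, List.isChain_singleton _, fun x hx y hy => ?_⟩
  obtain rfl : y = (v, b') := by simpa using hy.symm
  exact h.2.2 x hx (v, b) rfl

lemma exists_t_zpow_conj_of_eq {u : ℤˣ} {a : G} (ha : a ∈ toSubgroup A B u) :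
    ∃ a' : G, t ^ (u : ℤ) * of a * (t ^ (u : ℤ))⁻¹ = (of a' : HNNExtension G A B φ) := by
  rcases Int.units_eq_one_or u with rfl | rfl
  · exact ⟨φ ⟨a, ha⟩, by simpa using (equiv_eq_conj (φ := φ) ⟨a, ha⟩).symm⟩
  · exact ⟨φ.symm ⟨a, ha⟩, by simpa using (equiv_symm_eq_conj (φ := φ) ⟨a, ha⟩).symm⟩

lemma exists_reducedWord_prod_eq (x : HNNExtension G A B φ) :
    ∃ w : ReducedWord G A B, w.prod φ = x := by
  obtain ⟨d⟩ := TransversalPair.nonempty G A B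
  exact ⟨(equiv φ d x).toReducedWord, (equiv φ d).symm_apply_apply x⟩

namespace NormalWord.ReducedWord

lemma prod_eq_of_mul_prodLetters (w : ReducedWord G A B) :
    w.prod φ = of w.head * prodLetters w.toList := rfl

lemma exists_prod_mul_of (w : ReducedWord G A B) (g : G) :
    ∃ w' : ReducedWord G A B,
      w'.toList.length = w.toList.length ∧ w'.prod φ = w.prod φ * of g := by
  obtain ⟨h, l, hl⟩ := w
  rcases List.eq_nil_or_concat' l with rfl | ⟨l', ⟨v, b⟩, rfl⟩
  · exact ⟨⟨h * g, [], List.isChain_nil⟩, rfl, by simp [prod_eq_of_mul_prodLetters]⟩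
  · refine ⟨⟨h, l' ++ [(v, b * g)], isChain_noPinch_append_singleton hl⟩, by simp, ?_⟩
    simp [prod_eq_of_mul_prodLetters, mul_assoc]

/-- Read cyclically, the head is absorbed into the last letter, which must then not form a pinch
with the first letter. -/
def IsCyclicallyReduced (w : ReducedWord G A B) : Prop :=
  ∀ a ∈ w.toList.getLast?, ∀ q ∈ w.toList.head?, NoPinch A B (a.1, a.2 * w.head) q

lemma exists_isConj_length_lt (w : ReducedWord G A B) (hw : ¬ w.IsCyclicallyReduced) :
    ∃ w' : ReducedWord G A B,
      w'.toList.length < w.toList.length ∧ IsConj (w.prod φ) (w'.prod φ) := by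
  obtain ⟨h, l, hl⟩ := w
  simp only [IsCyclicallyReduced, NoPinch, not_forall, exists_prop] at hw
  obtain ⟨⟨v, b⟩, hlast, q, hfirst, hpinch, hvq⟩ := hw
  rcases l with _ | ⟨⟨u, g⟩, l⟩
  · simp at hlast
  obtain rfl : q = (u, g) := by simpa using hfirst.symm
  rcases List.eq_nil_or_concat' l with rfl | ⟨m, a, rfl⟩
  · simp_all
  obtain rfl : a = (v, b) := by
    rw [← List.cons_append, List.getLast?_concat] at hlast
    simpa using hlast
  obtain rfl : u = -v := by
    simpa using (Int.units_ne_iff_eq_neg.1 (Ne.symm hvq))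
  obtain ⟨a', ha'⟩ := exists_t_zpow_conj_of_eq (φ := φ) hpinch
  have hm : m.IsChain (NoPinch A B) :=
    hl.infix ⟨[(-v, g)], [(v, b)], by simp⟩
  obtain ⟨w', hlen, hprod⟩ := exists_prod_mul_of (φ := φ) ⟨g, m, hm⟩ a'
  refine ⟨w', by simp [hlen], isConj_iff.2 ⟨t ^ (v : ℤ) * (of h)⁻¹, ?_⟩⟩
  rw [hprod, ← ha']
  simp only [prod_eq_of_mul_prodLetters, prodLetters_cons, prodLetters_append, prodLetters_nil,
    Units.val_neg, zpow_neg, map_mul]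
  group

lemma exists_isCyclicallyReduced_isConj (w : ReducedWord G A B) :
    ∃ w' : ReducedWord G A B, w'.IsCyclicallyReduced ∧ IsConj (w.prod φ) (w'.prod φ) := by
  by_cases hw : w.IsCyclicallyReduced
  · exact ⟨w, hw, IsConj.refl _⟩
  · obtain ⟨w', hlt, hconj⟩ := exists_isConj_length_lt (φ := φ) w hw
    obtain ⟨w'', hw'', hconj'⟩ := exists_isCyclicallyReduced_isConj w'
    exact ⟨w'', hw'', hconj.trans hconj'⟩
termination_by w.toList.length

lemma exists_pow_eq (w : ReducedWord G A B) (hw : w.IsCyclicallyReduced) (n : ℕ) :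
    ∃ w' : ReducedWord G A B,
      w'.toList.length = (n + 1) * w.toList.length ∧ w'.prod φ = w.prod φ ^ (n + 1) := by
  obtain ⟨h, l, hl⟩ := w
  rcases List.eq_nil_or_concat' l with rfl | ⟨l', ⟨v, b⟩, rfl⟩
  · exact ⟨⟨h ^ (n + 1), [], List.isChain_nil⟩, rfl, by simp [prod_eq_of_mul_prodLetters]⟩
  -- The copies are glued by absorbing each head into the preceding last letter; the seams are
  -- pinch-free because `NoPinch` only sees the exponent of the following letter.
  suffices ∀ n : ℕ, ∃ L : List (ℤˣ × G), L.IsChain (NoPinch A B) ∧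
      L.head?.map Prod.fst = (l' ++ [(v, b)]).head?.map Prod.fst ∧
      L.length = (n + 1) * (l' ++ [(v, b)]).length ∧
      of h * prodLetters L =
        (of h * prodLetters (l' ++ [(v, b)]) : HNNExtension G A B φ) ^ (n + 1) by
    obtain ⟨L, hL, -, hlen, hprod⟩ := this n
    exact ⟨⟨h, L, hL⟩, hlen, hprod⟩
  intro n
  induction n with
  | zero => exact ⟨l' ++ [(v, b)], hl, rfl, by simp, by simp⟩
  | succ n ih =>
    obtain ⟨L, hL, hhead, hlen, hprod⟩ := ih
    refine ⟨l' ++ [(v, b * h)] ++ L, ?_, by cases l' <;> simp, ?_, ?_⟩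
    · refine List.isChain_append.2 ⟨isChain_noPinch_append_singleton hl, hL, ?_⟩
      intro x hx y hy
      obtain rfl : x = (v, b * h) := by simpa using hx.symm
      have : (l' ++ [(v, b)]).head?.map Prod.fst = some y.1 := by rw [← hhead, hy]; rfl
      obtain ⟨q, hq, hqy⟩ := Option.map_eq_some_iff.1 this
      exact fun hmem => hqy ▸ hw (v, b) (by simp) q hq hmem
    · simp only [List.length_append, List.length_singleton, hlen]
      ring
    · rw [pow_succ', ← hprod]
      simp [mul_assoc]

end NormalWord.ReducedWord

noncomputable def tLength (x : HNNExtension G A B φ) : ℕ :=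
  (equiv φ (Classical.arbitrary (TransversalPair G A B)) x).toList.length

lemma tLength_prod (w : ReducedWord G A B) : tLength (w.prod φ) = w.toList.length := by
  have hx : (equiv φ (Classical.arbitrary _) (w.prod φ)).prod φ = w.prod φ :=
    (equiv φ _).symm_apply_apply _
  rw [tLength]
  simpa using congrArg List.length (ReducedWord.map_fst_eq_and_of_prod_eq φ hx).1

lemma tLength_of_mul (g : G) (x : HNNExtension G A B φ) : tLength (of g * x) = tLength x := by
  simp only [tLength, equiv, Equiv.coe_fn_mk, mul_smul, of_smul_eq_smul, group_smul_toList]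

lemma length_unitsSMul_le {d : TransversalPair G A B} (u : ℤˣ) (w : NormalWord d) :
    (unitsSMul φ u w).toList.length ≤ w.toList.length + 1 := by
  rw [unitsSMul]
  split_ifs with hcan
  · cases w using consRecOn with
    | ofGroup => simp [Cancels] at hcan
    | cons =>
      simp only [unitsSMulWithCancel, consRecOn_cons, group_smul_toList, cons_toList,
        List.length_cons]
      omega
  · simp

lemma tLength_t_zpow_mul_le (u : ℤˣ) (x : HNNExtension G A B φ) :
    tLength (t ^ (u : ℤ) * x) ≤ tLength x + 1 := by
  simp only [tLength, equiv, Equiv.coe_fn_mk, mul_smul, t_pow_smul_eq_unitsSMul]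
  exact length_unitsSMul_le u _

lemma exists_tLength_mul_le (a : HNNExtension G A B φ) :
    ∃ N : ℕ, ∀ x, tLength (a * x) ≤ tLength x + N := by
  suffices ∃ N : ℕ, ∀ x, tLength (a * x) ≤ tLength x + N ∧ tLength x ≤ tLength (a * x) + N from
    this.imp fun N hN x => (hN x).1
  induction a using induction_on with
  | of g => exact ⟨0, fun x => by simp [tLength_of_mul]⟩
  | t =>
    refine ⟨1, fun x => ⟨by simpa using tLength_t_zpow_mul_le 1 x, ?_⟩⟩
    have := tLength_t_zpow_mul_le (-1) (t * x)
    rwa [Units.val_neg, Units.val_one, zpow_neg_one, inv_mul_cancel_left] at this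
  | mul a b ha hb =>
    obtain ⟨M, hM⟩ := ha
    obtain ⟨N, hN⟩ := hb
    refine ⟨M + N, fun x => ?_⟩
    have := hM (b * x)
    have := hN x
    rw [mul_assoc]
    omega
  | inv a ha =>
    obtain ⟨N, hN⟩ := ha
    refine ⟨N, fun x => ?_⟩
    have := hN (a⁻¹ * x)
    rw [mul_inv_cancel_left] at this
    omega

lemma exists_tLength_conj_of_le (c : HNNExtension G A B φ) :
    ∃ N : ℕ, ∀ g : G, tLength (c * of g * c⁻¹) ≤ N := by
  obtain ⟨N, hN⟩ := exists_tLength_mul_le c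
  refine ⟨tLength c⁻¹ + N, fun g => ?_⟩
  rw [mul_assoc, ← tLength_of_mul g c⁻¹]
  exact hN _

lemma tLength_pow_of_isCyclicallyReduced (w : ReducedWord G A B) (hw : w.IsCyclicallyReduced)
    (n : ℕ) : tLength (w.prod φ ^ n) = n * w.toList.length := by
  cases n with
  | zero => simpa [ReducedWord.prod] using tLength_prod (φ := φ) (ReducedWord.empty G A B)
  | succ n =>
    obtain ⟨w', hlen, hprod⟩ := w.exists_pow_eq (φ := φ) hw n
    rw [← hprod, tLength_prod, hlen]

theorem exists_isConj_of_of_pow_eq {x : HNNExtension G A B φ} {k : ℕ} {g : G} (hk : k ≠ 0)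
    (hx : x ^ k = of g) : ∃ g' : G, IsConj x (of g') := by
  obtain ⟨w₀, rfl⟩ := exists_reducedWord_prod_eq x
  obtain ⟨w, hw, hconj⟩ := w₀.exists_isCyclicallyReduced_isConj (φ := φ)
  rcases hnil : w.toList with _ | ⟨a, l⟩
  · exact ⟨w.head, by simpa [ReducedWord.prod, hnil] using hconj⟩
  exfalso
  obtain ⟨c, hc⟩ := isConj_iff.1 hconj
  obtain ⟨N, hN⟩ := exists_tLength_conj_of_le c
  have hbound := hN (g ^ (N + 1))
  rw [map_pow, ← hx, ← pow_mul, ← conj_pow, hc, tLength_pow_of_isCyclicallyReduced w hw, hnil,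
    List.length_cons] at hbound
  have : N + 1 ≤ k * (N + 1) * (l.length + 1) :=
    le_mul_of_le_of_one_le (Nat.le_mul_of_pos_left _ (Nat.pos_of_ne_zero hk)) (by omega)
  omega

end HNNExtension

theorem stmt9_general {G : Type*} [Group G] (A B : Subgroup G) (φ : A ≃* B)
    (g₁ : G) :
    IsProperPower (HNNExtension.of g₁ : HNNExtension G A B φ) ↔
      ∃ (k : ℕ) (g₂ : G), 2 ≤ k ∧
        IsConj (HNNExtension.of g₁ : HNNExtension G A B φ) ((HNNExtension.of g₂) ^ k) := by
  constructor
  · rintro ⟨h, k, hk, hpow⟩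
    obtain ⟨g₂, hconj⟩ := HNNExtension.exists_isConj_of_of_pow_eq (by omega) hpow.symm
    exact ⟨k, g₂, hk, hpow ▸ hconj.pow k⟩
  · rintro ⟨k, g₂, hk, hconj⟩
    exact IsProperPower.of_isConj ⟨_, k, hk, rfl⟩ hconj

theorem stmt9 {G : Type*} [Group G] (A B : Subgroup G) (φ : A ≃* B)
    (g₁ : G) (hg₁ : ¬ IsProperPower g₁) :
    IsProperPower (HNNExtension.of g₁ : HNNExtension G A B φ) ↔
      ∃ (k : ℕ) (g₂ : G), 2 ≤ k ∧
        IsConj (HNNExtension.of g₁ : HNNExtension G A B φ) ((HNNExtension.of g₂) ^ k) :=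
  stmt9_general A B φ g₁
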